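/- Let A ∈ ℝ^{m×m} be symmetric positive definite, let y ∈ ℝ^m be nonzero, and let Ω ∈ ℝ^{m×n_Ω}. Let W_k ∈ ℝ^{m×r} have orthonormal columns spanning the Krylov subspace K_k(A, y) with W_kᵀ y = ‖y‖₂ e₁, and let Ŵ_k ∈ ℝ^{m×r̂} have orthonormal columns spanning the augmented Krylov subspace K_k(A, [y, Ω]) with Ŵ_kᵀ y = ‖y‖₂ e₁. Set T_k = W_kᵀ A W_k and T̂_k = Ŵ_kᵀ A Ŵ_k. Then 0 ≤ yᵀ A⁻¹ y − ‖y‖₂² (T̂_k⁻¹)₁₁ ≤ yᵀ A⁻¹ y − ‖y‖₂² (T_k⁻¹)₁₁, where (M⁻¹)₁₁ = e₁ᵀ M⁻¹ e₁. -/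

import Mathlib

open Matrix

/-- Euclidean norm of a vector in `ℝ^m`. -/
noncomputable def euclNorm {m : ℕ} (y : Fin m → ℝ) : ℝ :=
  Real.sqrt (y ⬝ᵥ y)

/-- The `A`-norm `‖v‖_A = √(vᵀ A v)`. -/
noncomputable def anorm {m : ℕ} (A : Matrix (Fin m) (Fin m) ℝ) (v : Fin m → ℝ) : ℝ :=
  Real.sqrt (v ⬝ᵥ A *ᵥ v)

/-- The range (column span) of a matrix `W ∈ ℝ^{m×r}`. -/
def colSpan {m r : ℕ} (W : Matrix (Fin m) (Fin r) ℝ) : Submodule ℝ (Fin m → ℝ) :=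
  Submodule.span ℝ (Set.range Wᵀ)

/-- The block Krylov subspace `K_k(A, Z)`, the span of the columns of
`Z, AZ, …, A^{k-1} Z`. -/
def krylov {m b : ℕ} (k : ℕ) (A : Matrix (Fin m) (Fin m) ℝ)
    (Z : Matrix (Fin m) (Fin b) ℝ) : Submodule ℝ (Fin m → ℝ) :=
  Submodule.span ℝ (⋃ j ∈ Finset.range k, Set.range (A ^ j * Z)ᵀ)

/-- The Krylov subspace `K_k(A, y)` for a vector `y`, the span of
`y, Ay, …, A^{k-1} y`. -/
def krylovVec {m : ℕ} (k : ℕ) (A : Matrix (Fin m) (Fin m) ℝ)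
    (y : Fin m → ℝ) : Submodule ℝ (Fin m → ℝ) :=
  Submodule.span ℝ {v | ∃ j < k, v = (A ^ j) *ᵥ y}

/-- Condition number: ratio of the largest to the smallest eigenvalue
(for a symmetric positive definite matrix, the spectrum is the set of its eigenvalues). -/
noncomputable def condNum {m : ℕ} (A : Matrix (Fin m) (Fin m) ℝ) : ℝ :=
  sSup (spectrum ℝ A) / sInf (spectrum ℝ A)

/-- `Trace(log M) = log (det M)` for a symmetric positive definite matrix `M`. -/
noncomputable def traceLog {n : ℕ} (M : Matrix (Fin n) (Fin n) ℝ) : ℝ :=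
  Real.log M.det

/-- The eigenvalues of a symmetric matrix, sorted in decreasing order:
`eigDesc M i` is the `i`-th largest eigenvalue of `M` (`i` is 0-based). -/
noncomputable def eigDesc {m : ℕ} (M : Matrix (Fin m) (Fin m) ℝ) : Fin m → ℝ :=
  open scoped Classical in
  if h : M.IsHermitian then fun i => (h.eigenvalues ∘ Tuple.sort h.eigenvalues) i.rev
  else 0

/-!
The Galerkin approximation `x_W = W (WᵀAW)⁻¹ Wᵀy` of `x = A⁻¹y` from the column span of
`W` is characterised by `A`-orthogonality of the error `x - x_W` to that span. Hence
`yᵀA⁻¹y - (Wᵀy)ᵀ(WᵀAW)⁻¹(Wᵀy) = ‖x - x_W‖²_A`, which is nonnegative, and by Pythagoras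
`x_W` minimises `‖x - v‖_A` over the span. Since `K_k(A, y) ⊆ K_k(A, [y, Ω])`, the error
of the augmented space is the smaller one; the normalisation `Wᵀy = ‖y‖₂ e₁` turns
`(Wᵀy)ᵀ(WᵀAW)⁻¹(Wᵀy)` into `‖y‖₂² (T_k⁻¹)₁₁`.
-/

lemma Matrix.IsSymm.dotProduct_mulVec_comm {n : Type*} [Fintype n] {A : Matrix n n ℝ}
    (hA : A.IsSymm) (u v : n → ℝ) : u ⬝ᵥ A *ᵥ v = v ⬝ᵥ A *ᵥ u := by
  simpa only [hA.eq] using dotProduct_transpose_mulVec A u v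

lemma Matrix.PosDef.mulVec_inv_mulVec {n : Type*} [Fintype n] [DecidableEq n]
    {A : Matrix n n ℝ} (hA : A.PosDef) (v : n → ℝ) : A *ᵥ (A⁻¹ *ᵥ v) = v := by
  rw [mulVec_mulVec, mul_nonsing_inv _ ((isUnit_iff_isUnit_det _).mp hA.isUnit), one_mulVec]

lemma Matrix.mulVec_injective_of_transpose_mul_self_eq_one {n ι : Type*} [Fintype n]
    [Fintype ι] [DecidableEq ι] {W : Matrix n ι ℝ} (hW : Wᵀ * W = 1) :
    Function.Injective W.mulVec :=
  Function.LeftInverse.injective (g := Wᵀ.mulVec) fun x => by rw [mulVec_mulVec, hW, one_mulVec]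

lemma smul_single_dotProduct_mulVec_smul_single {ι : Type*} [Fintype ι] [DecidableEq ι]
    (M : Matrix ι ι ℝ) (i : ι) (c : ℝ) :
    (c • Pi.single i 1 : ι → ℝ) ⬝ᵥ M *ᵥ (c • Pi.single i 1) = c ^ 2 * M i i := by
  simp only [mulVec_smul, smul_dotProduct, dotProduct_smul, mulVec_single, single_dotProduct,
    smul_eq_mul, col_apply, op_smul_eq_mul, one_mul]
  ring

lemma colSpan_eq_range_mulVecLin {m r : ℕ} (W : Matrix (Fin m) (Fin r) ℝ) :
    colSpan W = LinearMap.range W.mulVecLin := by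
  rw [colSpan, range_mulVecLin]
  rfl

section Galerkin

variable {n ι κ : Type*} [Fintype n] [Fintype ι] [DecidableEq ι] [Fintype κ]
  [DecidableEq κ] {A : Matrix n n ℝ}

noncomputable def galerkinApprox (A : Matrix n n ℝ) (W : Matrix n ι ℝ) (y : n → ℝ) : n → ℝ :=
  W *ᵥ ((Wᵀ * A * W)⁻¹ *ᵥ (Wᵀ *ᵥ y))

noncomputable def galerkinError [DecidableEq n] (A : Matrix n n ℝ) (W : Matrix n ι ℝ)
    (y : n → ℝ) : n → ℝ :=
  A⁻¹ *ᵥ y - galerkinApprox A W y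

lemma transpose_mulVec_mulVec_galerkinApprox (hA : A.PosDef) {W : Matrix n ι ℝ}
    (hW : Function.Injective W.mulVec) (y : n → ℝ) :
    Wᵀ *ᵥ (A *ᵥ galerkinApprox A W y) = Wᵀ *ᵥ y := by
  have hT : IsUnit (Wᵀ * A * W).det :=
    (isUnit_iff_isUnit_det _).mp (hA.conjTranspose_mul_mul_same hW).isUnit
  rw [galerkinApprox, mulVec_mulVec, mulVec_mulVec, mulVec_mulVec, mul_nonsing_inv _ hT,
    one_mulVec]

lemma dotProduct_mulVec_galerkinError_eq_zero [DecidableEq n] (hA : A.PosDef)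
    {W : Matrix n ι ℝ} (hW : Function.Injective W.mulVec) (y : n → ℝ) (u : ι → ℝ) :
    (W *ᵥ u) ⬝ᵥ A *ᵥ galerkinError A W y = 0 := by
  rw [galerkinError, mulVec_sub, hA.mulVec_inv_mulVec, dotProduct_comm,
    ← dotProduct_transpose_mulVec, mulVec_sub, transpose_mulVec_mulVec_galerkinApprox hA hW,
    sub_self, dotProduct_zero]

lemma dotProduct_inv_mulVec_sub_eq_galerkinError [DecidableEq n] (hA : A.PosDef)
    {W : Matrix n ι ℝ} (hW : Function.Injective W.mulVec) (y : n → ℝ) :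
    y ⬝ᵥ A⁻¹ *ᵥ y - (Wᵀ *ᵥ y) ⬝ᵥ (Wᵀ * A * W)⁻¹ *ᵥ (Wᵀ *ᵥ y) =
      galerkinError A W y ⬝ᵥ A *ᵥ galerkinError A W y := by
  set z := (Wᵀ * A * W)⁻¹ *ᵥ (Wᵀ *ᵥ y)
  set e := galerkinError A W y
  have hAsymm : A.IsSymm := isHermitian_iff_isSymm.mp hA.isHermitian
  have horth : e ⬝ᵥ A *ᵥ (W *ᵥ z) = 0 := by
    rw [hAsymm.dotProduct_mulVec_comm]
    exact dotProduct_mulVec_galerkinError_eq_zero hA hW y z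
  have hy : e ⬝ᵥ A *ᵥ (A⁻¹ *ᵥ y) = y ⬝ᵥ A⁻¹ *ᵥ y - (Wᵀ *ᵥ y) ⬝ᵥ z := by
    rw [hA.mulVec_inv_mulVec, show e = A⁻¹ *ᵥ y - W *ᵥ z from rfl, sub_dotProduct,
      dotProduct_comm (A⁻¹ *ᵥ y), dotProduct_comm (W *ᵥ z), dotProduct_comm (Wᵀ *ᵥ y),
      dotProduct_transpose_mulVec]
  calc y ⬝ᵥ A⁻¹ *ᵥ y - (Wᵀ *ᵥ y) ⬝ᵥ z
      = e ⬝ᵥ A *ᵥ (A⁻¹ *ᵥ y) - e ⬝ᵥ A *ᵥ (W *ᵥ z) := by rw [hy, horth, sub_zero]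
    _ = e ⬝ᵥ A *ᵥ e := by rw [← dotProduct_sub, ← mulVec_sub]; rfl

lemma dotProduct_mulVec_galerkinError_le [DecidableEq n] (hA : A.PosDef) {W : Matrix n ι ℝ}
    (hW : Function.Injective W.mulVec) (y : n → ℝ) (u : ι → ℝ) :
    galerkinError A W y ⬝ᵥ A *ᵥ galerkinError A W y ≤
      (A⁻¹ *ᵥ y - W *ᵥ u) ⬝ᵥ A *ᵥ (A⁻¹ *ᵥ y - W *ᵥ u) := by
  set e := galerkinError A W y
  set d := W *ᵥ ((Wᵀ * A * W)⁻¹ *ᵥ (Wᵀ *ᵥ y) - u)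
  have hsplit : A⁻¹ *ᵥ y - W *ᵥ u = e + d := by
    simp only [e, d, galerkinError, galerkinApprox, mulVec_sub]
    abel
  have hcross : d ⬝ᵥ A *ᵥ e = 0 := dotProduct_mulVec_galerkinError_eq_zero hA hW y _
  have hsymm : e ⬝ᵥ A *ᵥ d = d ⬝ᵥ A *ᵥ e :=
    (isHermitian_iff_isSymm.mp hA.isHermitian).dotProduct_mulVec_comm e d
  have hd : 0 ≤ d ⬝ᵥ A *ᵥ d := by simpa using hA.posSemidef.dotProduct_mulVec_nonneg d
  rw [hsplit, mulVec_add, dotProduct_add, add_dotProduct, add_dotProduct, hsymm, hcross]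
  linarith

lemma dotProduct_mulVec_galerkinError_antitone [DecidableEq n] (hA : A.PosDef)
    {W : Matrix n ι ℝ} {W' : Matrix n κ ℝ} (hW' : Function.Injective W'.mulVec)
    (hWW' : LinearMap.range W.mulVecLin ≤ LinearMap.range W'.mulVecLin) (y : n → ℝ) :
    galerkinError A W' y ⬝ᵥ A *ᵥ galerkinError A W' y ≤
      galerkinError A W y ⬝ᵥ A *ᵥ galerkinError A W y := by
  obtain ⟨u, hu⟩ := hWW' ⟨(Wᵀ * A * W)⁻¹ *ᵥ (Wᵀ *ᵥ y), rfl⟩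
  have hu : W' *ᵥ u = galerkinApprox A W y := hu
  simpa only [galerkinError, ← hu] using dotProduct_mulVec_galerkinError_le hA hW' y u

end Galerkin

theorem stmt3_general {m k nΩ r rh : ℕ} [NeZero r] [NeZero rh]
    (A : Matrix (Fin m) (Fin m) ℝ) (hA : A.PosDef)
    (y : Fin m → ℝ)
    (Ω : Matrix (Fin m) (Fin nΩ) ℝ)
    (W : Matrix (Fin m) (Fin r) ℝ) (hW : Wᵀ * W = 1)
    (hWspan : colSpan W = krylovVec k A y)
    (hWy : Wᵀ *ᵥ y = euclNorm y • (Pi.single (0 : Fin r) (1 : ℝ) : Fin r → ℝ))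
    (Wh : Matrix (Fin m) (Fin rh) ℝ) (hWh : Whᵀ * Wh = 1)
    (hWhspan : colSpan Wh = krylovVec k A y ⊔ krylov k A Ω)
    (hWhy : Whᵀ *ᵥ y = euclNorm y • (Pi.single (0 : Fin rh) (1 : ℝ) : Fin rh → ℝ)) :
    0 ≤ y ⬝ᵥ (A⁻¹ *ᵥ y) - euclNorm y ^ 2 * (Whᵀ * A * Wh)⁻¹ 0 0 ∧
      y ⬝ᵥ (A⁻¹ *ᵥ y) - euclNorm y ^ 2 * (Whᵀ * A * Wh)⁻¹ 0 0 ≤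
        y ⬝ᵥ (A⁻¹ *ᵥ y) - euclNorm y ^ 2 * (Wᵀ * A * W)⁻¹ 0 0 := by
  have hWinj := mulVec_injective_of_transpose_mul_self_eq_one hW
  have hWhinj := mulVec_injective_of_transpose_mul_self_eq_one hWh
  have hsub : LinearMap.range W.mulVecLin ≤ LinearMap.range Wh.mulVecLin := by
    rw [← colSpan_eq_range_mulVecLin, ← colSpan_eq_range_mulVecLin, hWspan, hWhspan]
    exact le_sup_left
  rw [← smul_single_dotProduct_mulVec_smul_single, ← smul_single_dotProduct_mulVec_smul_single,
    ← hWy, ← hWhy, dotProduct_inv_mulVec_sub_eq_galerkinError hA hWinj,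
    dotProduct_inv_mulVec_sub_eq_galerkinError hA hWhinj]
  refine ⟨?_, dotProduct_mulVec_galerkinError_antitone hA hWhinj hsub y⟩
  simpa using hA.posSemidef.dotProduct_mulVec_nonneg (galerkinError A Wh y)

/-- augmentation does not harm the quadratic form approximation. -/
theorem stmt3 {m k nΩ r rh : ℕ} [NeZero r] [NeZero rh]
    (A : Matrix (Fin m) (Fin m) ℝ) (hA : A.PosDef)
    (y : Fin m → ℝ) (hy : y ≠ 0)
    (Ω : Matrix (Fin m) (Fin nΩ) ℝ)
    (W : Matrix (Fin m) (Fin r) ℝ) (hW : Wᵀ * W = 1)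
    (hWspan : colSpan W = krylovVec k A y)
    (hWy : Wᵀ *ᵥ y = euclNorm y • (Pi.single (0 : Fin r) (1 : ℝ) : Fin r → ℝ))
    (Wh : Matrix (Fin m) (Fin rh) ℝ) (hWh : Whᵀ * Wh = 1)
    (hWhspan : colSpan Wh = krylovVec k A y ⊔ krylov k A Ω)
    (hWhy : Whᵀ *ᵥ y = euclNorm y • (Pi.single (0 : Fin rh) (1 : ℝ) : Fin rh → ℝ)) :
    0 ≤ y ⬝ᵥ (A⁻¹ *ᵥ y) - euclNorm y ^ 2 * (Whᵀ * A * Wh)⁻¹ 0 0 ∧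
      y ⬝ᵥ (A⁻¹ *ᵥ y) - euclNorm y ^ 2 * (Whᵀ * A * Wh)⁻¹ 0 0 ≤
        y ⬝ᵥ (A⁻¹ *ᵥ y) - euclNorm y ^ 2 * (Wᵀ * A * W)⁻¹ 0 0 :=
  stmt3_general A hA y Ω W hW hWspan hWy Wh hWh hWhspan hWhy
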